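/- arXiv:1203.1678 — 2 statements merged into one kernel-verified Lean document; each statement's English description precedes it below -/
import Mathlib

section
/- Let (X,S) be an association scheme whose thin residue T = O^θ(S) is C_p × C_p and with S//T cyclic of prime order q. For every nonprincipal irreducible character φ of T and every s ∈ S \ T, the following are equivalent: (i) L(s) = Ker φ; (ii) e_φ σ_s ≠ 0 in the adjacency algebra; (iii) ℂe_φ ⊗_{ℂT} ℂ(TsT) ≠ 0. -/
open scoped Classical

/-- The diagonal relation `1_X`. -/
def diagRel (X : Type*) : Set (X × X) := {p | p.1 = p.2}

/-- The converse relation `s*`. -/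
def conv {X : Type*} (s : Set (X × X)) : Set (X × X) := {p | (p.2, p.1) ∈ s}

/-- The intersection number `c_{st}^u`, well-defined for association schemes. -/
noncomputable def inum {X : Type*} (s t u : Set (X × X)) : ℕ :=
  sSup {n | ∃ p ∈ u, n = Nat.card {z : X | (p.1, z) ∈ s ∧ (z, p.2) ∈ t}}

/-- `(X, S)` is an association scheme. -/
def IsScheme {X : Type*} (S : Set (Set (X × X))) : Prop :=
  (∀ x y : X, ∃! s, s ∈ S ∧ (x, y) ∈ s) ∧
  (∀ s ∈ S, s.Nonempty) ∧
  diagRel X ∈ S ∧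
  (∀ s ∈ S, conv s ∈ S) ∧
  (∀ s ∈ S, ∀ t ∈ S, ∀ u ∈ S, ∀ p ∈ u, ∀ q ∈ u,
    Nat.card {z : X | (p.1, z) ∈ s ∧ (z, p.2) ∈ t} =
      Nat.card {z : X | (q.1, z) ∈ s ∧ (z, q.2) ∈ t})

/-- The complex product `PQ` of subsets of `S`. -/
noncomputable def cprod {X : Type*} (S P Q : Set (Set (X × X))) : Set (Set (X × X)) :=
  {u ∈ S | ∃ p ∈ P, ∃ q ∈ Q, inum p q u ≠ 0}

/-- The valency `n_s`. -/
noncomputable def nval {X : Type*} (s : Set (X × X)) : ℕ :=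
  sSup {n | ∃ x : X, n = Nat.card {y : X | (x, y) ∈ s}}

/-- `T` is a closed subset of `S`. -/
def IsClosedSub {X : Type*} (S T : Set (Set (X × X))) : Prop :=
  T.Nonempty ∧ T ⊆ S ∧ cprod S T T ⊆ T

/-- `T` is strongly normal in `S`. -/
def IsStronglyNormal {X : Type*} (S T : Set (Set (X × X))) : Prop :=
  IsClosedSub S T ∧ ∀ s ∈ S, cprod S (cprod S {conv s} T) {s} ⊆ T

/-- The thin radical `O_θ(S)`. -/
noncomputable def thinRadical {X : Type*} (S : Set (Set (X × X))) : Set (Set (X × X)) :=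
  {s ∈ S | nval s = 1}

/-- The thin residue `O^θ(S)`. -/
noncomputable def thinResidue {X : Type*} (S : Set (Set (X × X))) : Set (Set (X × X)) :=
  ⋂₀ {T | IsStronglyNormal S T}

/-- `T` is thin: all valencies `1`. -/
def IsThin {X : Type*} (T : Set (Set (X × X))) : Prop := ∀ t ∈ T, nval t = 1

/-- The left stabilizer `L(s) = {t ∈ T | ts = {s}}`. -/
noncomputable def lstab {X : Type*} (S T : Set (Set (X × X))) (s : Set (X × X)) :
    Set (Set (X × X)) := {t ∈ T | cprod S {t} {s} = {s}}

/-- `e` is an isomorphism from `C_p × C_p` onto the thin closed subset `T`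
(with the relational product as group operation). -/
def IsoElemAb {X : Type*} (S T : Set (Set (X × X))) (p : ℕ)
    (e : ZMod p × ZMod p → Set (X × X)) : Prop :=
  (∀ a, e a ∈ T) ∧ Function.Injective e ∧ (∀ t ∈ T, ∃ a, e a = t) ∧
  e 0 = diagRel X ∧ ∀ a b, cprod S {e a} {e b} = {e (a + b)}

/-- The coset `xT`. -/
def coset {X : Type*} (T : Set (Set (X × X))) (x : X) : Set X := {y | ∃ t ∈ T, (x, y) ∈ t}

/-- The point set `X/T`. -/
def pts {X : Type*} (T : Set (Set (X × X))) : Set (Set X) := {C | ∃ x, C = coset T x}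

/-- `L_{ij}` for the cosets of `x` and `y`: the left stabilizer of any relation containing
`(x, y)`. -/
noncomputable def pairStab {X : Type*} (S T : Set (Set (X × X))) (x y : X) :
    Set (Set (X × X)) :=
  {t ∈ T | ∀ s ∈ S, (x, y) ∈ s → cprod S {t} {s} = {s}}

/-- The line `L_i(M)` through the coset of `x` determined by the subgroup `M < T`. -/
noncomputable def lineOf {X : Type*} (S T : Set (Set (X × X))) (x : X)
    (M : Set (Set (X × X))) : Set (Set X) :=
  insert (coset T x) {C | ∃ y, C = coset T y ∧ coset T y ≠ coset T x ∧ pairStab S T x y = M}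

/-- The set of lines of the incidence structure on `X/T`. -/
noncomputable def linesOf {X : Type*} (S T : Set (Set (X × X))) : Set (Set (Set X)) :=
  {ℓ | ∃ x M, IsClosedSub S M ∧ M ⊆ T ∧ M ≠ {diagRel X} ∧ M ≠ T ∧
    ℓ = lineOf S T x M ∧ 2 ≤ Nat.card ℓ}

/-- The adjacency matrix `σ_s`. -/
noncomputable def adjMat {X : Type*} [Fintype X] (s : Set (X × X)) : Matrix X X ℂ :=
  fun x y => if (x, y) ∈ s then 1 else 0

/-- The central primitive idempotent `e_φ` of `ℂT ≅ ℂ[C_p × C_p]` corresponding to the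
irreducible character `φ`, transported by the isomorphism `e`. -/
noncomputable def eIdem {X : Type*} [Fintype X] (p : ℕ) [NeZero p]
    (φ : AddChar (ZMod p × ZMod p) ℂ) (e : ZMod p × ZMod p → Set (X × X)) : Matrix X X ℂ :=
  ((p : ℂ) ^ 2)⁻¹ • ∑ a : ZMod p × ZMod p, φ (-a) • adjMat (e a)

/-!
Write `L(u) = {a | e a ○ u = u}`. Since `e_φ σ_{e a} = φ(a) e_φ`, an `a ∈ L(u)` with `φ a ≠ 1`
kills `e_φ σ_u`; conversely, if `L(u) ≤ Ker φ`, the entry of `e_φ σ_u` at a pair in `u` is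
`|L(u)| / p² ≠ 0`. Multiplying by `σ_t` for `t ∈ T` shows that `e_φ σ_u = 0` propagates through the
double coset `TsT`. Finally `L(s) = Ker φ` follows by orders once `L(s)` is nontrivial: a
trivial `L(s)` would make `s` thin, and then right multiplication by `s` permutes the `q` double
cosets freely, hence transitively since `q` is prime; so every relation would be thin and the thin
residue trivial.
-/

open scoped SetRel

namespace SetRel

variable {X : Type*}

/-- `t` is the graph of a permutation; for a relation of an association scheme this is
equivalent to valency `nval t = 1`. -/
def IsThin (t : SetRel X X) : Prop := t ○ t.inv = .id ∧ t.inv ○ t = .id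

namespace IsThin

variable {t : SetRel X X}

lemma inv (ht : t.IsThin) : t.inv.IsThin := ⟨ht.2, ht.1⟩

lemma comp {u : SetRel X X} (ht : t.IsThin) (hu : u.IsThin) : (t ○ u).IsThin := by
  constructor
  · rw [inv_comp, comp_assoc, ← comp_assoc u, hu.1, id_comp, ht.1]
  · rw [inv_comp, comp_assoc, ← comp_assoc t.inv, ht.2, id_comp, hu.2]

lemma comp_inv_cancel_left (ht : t.IsThin) (u : SetRel X X) : t ○ (t.inv ○ u) = u := by
  rw [← comp_assoc, ht.1, id_comp]

lemma inv_comp_cancel_left (ht : t.IsThin) (u : SetRel X X) : t.inv ○ (t ○ u) = u := by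
  rw [← comp_assoc, ht.2, id_comp]

lemma comp_inv_cancel_right (ht : t.IsThin) (u : SetRel X X) : u ○ t ○ t.inv = u := by
  rw [comp_assoc, ht.1, comp_id]

lemma eq_of_mem_of_mem_left (ht : t.IsThin) {x y y' : X} (h : (x, y) ∈ t) (h' : (x, y') ∈ t) :
    y = y' := by
  have : (y, y') ∈ t.inv ○ t := ⟨x, h, h'⟩
  rwa [ht.2] at this

lemma eq_of_mem_of_mem_right (ht : t.IsThin) {x x' y : X} (h : (x, y) ∈ t) (h' : (x', y) ∈ t) :
    x = x' := by
  have : (x, x') ∈ t ○ t.inv := ⟨y, h, h'⟩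
  rwa [ht.1] at this

lemma exists_mem_left (ht : t.IsThin) (y : X) : ∃ x, (x, y) ∈ t := by
  have : (y, y) ∈ t.inv ○ t := by rw [ht.2]; rfl
  obtain ⟨x, hx, -⟩ := this
  exact ⟨x, hx⟩

end IsThin

lemma isThin_id : (SetRel.id : SetRel X X).IsThin := by
  simp [IsThin]

/-- `s ○ s.inv = id` makes `s` the graph of an injection `X → X`, onto since `X` is finite. -/
lemma isThin_of_comp_inv_eq_id [Finite X] {s : SetRel X X} (h : s ○ s.inv = .id) : s.IsThin := by
  have hinj : ∀ {x x' y}, (x, y) ∈ s → (x', y) ∈ s → x = x' := fun hx hx' => by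
    have : (_, _) ∈ s ○ s.inv := ⟨_, hx, hx'⟩
    rwa [h] at this
  have htot : ∀ x, ∃ y, (x, y) ∈ s := fun x => by
    have : (x, x) ∈ s ○ s.inv := by rw [h]; rfl
    obtain ⟨y, hy, -⟩ := this
    exact ⟨y, hy⟩
  choose f hf using htot
  have hsurj : Function.Surjective f :=
    Finite.injective_iff_surjective.mp fun x x' hxx' => hinj (hf x) (hxx' ▸ hf x')
  have hfun : ∀ {x y}, (x, y) ∈ s → y = f x := fun {x y} hxy => by
    obtain ⟨w, rfl⟩ := hsurj y
    rw [hinj (hf w) hxy]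
  refine ⟨h, ?_⟩
  ext ⟨y, y'⟩
  constructor
  · rintro ⟨x, hy, hy'⟩
    exact (hfun hy).trans (hfun hy').symm
  · rintro (rfl : y = y')
    obtain ⟨x, rfl⟩ := hsurj y
    exact ⟨x, hf x, hf x⟩

end SetRel

open SetRel (comp_assoc comp_id id_comp inv_comp)

lemma adjMat_mul_of_subsingleton {X : Type*} [Fintype X] {a b : SetRel X X}
    (h : ∀ x y, {z | (x, z) ∈ a ∧ (z, y) ∈ b}.Subsingleton) :
    adjMat a * adjMat b = adjMat (a ○ b) := by
  ext x y
  rw [Matrix.mul_apply]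
  simp only [adjMat, boole_mul, ← ite_and]
  rw [Finset.sum_boole]
  split_ifs with hxy
  · obtain ⟨z, hz⟩ := hxy
    rw [Finset.card_eq_one.mpr ⟨z, ?_⟩, Nat.cast_one]
    ext z'
    simp only [Finset.mem_filter, Finset.mem_univ, true_and, Finset.mem_singleton]
    exact ⟨fun hz' => h x y hz' hz, fun hz' => hz' ▸ hz⟩
  · rw [Finset.card_eq_zero.mpr (Finset.filter_eq_empty_iff.mpr fun z _ hz => hxy ⟨z, hz⟩),
      Nat.cast_zero]

lemma adjMat_mul_of_isThin_left {X : Type*} [Fintype X] {t : SetRel X X} (ht : t.IsThin)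
    (u : SetRel X X) : adjMat t * adjMat u = adjMat (t ○ u) :=
  adjMat_mul_of_subsingleton fun _ _ _ hz _ hz' => ht.eq_of_mem_of_mem_left hz.1 hz'.1

lemma adjMat_mul_of_isThin_right {X : Type*} [Fintype X] {t : SetRel X X} (ht : t.IsThin)
    (u : SetRel X X) : adjMat u * adjMat t = adjMat (u ○ t) :=
  adjMat_mul_of_subsingleton fun _ _ _ hz _ hz' => ht.eq_of_mem_of_mem_right hz.2 hz'.2

/-- `⟨f⟩` acts freely, so `|α| = |α ⧸ ⟨f⟩| · ord f`; as `ord f ≠ 1` and `|α|` is prime, there is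
a single orbit. -/
theorem Equiv.Perm.exists_pow_apply_eq_of_prime_card {α : Type*} [Finite α]
    (hα : (Nat.card α).Prime) {f : Equiv.Perm α} (hf : f ≠ 1)
    (hfree : ∀ (n : ℕ) (a : α), (f ^ n) a = a → f ^ n = 1) (a b : α) :
    ∃ n : ℕ, (f ^ n) a = b := by
  have hstab : ∀ x : α, MulAction.stabilizer (Subgroup.zpowers f) x = ⊥ := by
    intro x
    rw [eq_bot_iff]
    rintro ⟨g, hg⟩ hgx
    obtain ⟨n, rfl⟩ := Submonoid.mem_powers_iff _ _ |>.mp (mem_powers_iff_mem_zpowers.mpr hg)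
    exact Subgroup.mem_bot.mpr (Subtype.ext (hfree n x hgx))
  have hcard := Nat.card_congr (MulAction.selfEquivOrbitsQuotientProd hstab)
  rw [Nat.card_prod, Nat.card_zpowers] at hcard
  have horbits : Nat.card (Quotient (MulAction.orbitRel (Subgroup.zpowers f) α)) = 1 := by
    rcases Nat.prime_mul_iff.mp (hcard ▸ hα) with h | h
    · exact absurd (orderOf_eq_one_iff.mp h.2) hf
    · exact h.2
  obtain ⟨⟨g, hg⟩, hgb⟩ := Quotient.exact ((Nat.card_eq_one_iff_unique.mp horbits).1.elim
    (Quotient.mk _ b) (Quotient.mk _ a))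
  obtain ⟨n, rfl⟩ := Submonoid.mem_powers_iff _ _ |>.mp (mem_powers_iff_mem_zpowers.mpr hg)
  exact ⟨n, hgb⟩

lemma AddSubgroup.eq_of_le_of_ne_bot_of_ne_top {G : Type*} [AddGroup G] [Finite G] {p : ℕ}
    (hp : p.Prime) (hG : Nat.card G = p ^ 2) {H K : AddSubgroup G} (hHK : H ≤ K) (hH : H ≠ ⊥)
    (hK : K ≠ ⊤) : H = K := by
  obtain ⟨i, -, hHi⟩ := (Nat.dvd_prime_pow hp).mp (hG ▸ H.card_addSubgroup_dvd_card)
  obtain ⟨j, hj, hKj⟩ := (Nat.dvd_prime_pow hp).mp (hG ▸ K.card_addSubgroup_dvd_card)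
  have hi : i ≠ 0 := by
    rintro rfl
    exact hH (AddSubgroup.eq_bot_of_card_eq H (by rw [hHi, pow_zero]))
  have hj2 : j ≠ 2 := by
    rintro rfl
    exact hK (AddSubgroup.eq_top_of_card_eq K (hKj.trans hG.symm))
  refine AddSubgroup.eq_of_le_of_card_ge hHK ?_
  rw [hHi, hKj]
  exact Nat.pow_le_pow_right hp.pos (by omega)

/-- The left stabilizer `L(s)` of the paper, pulled back along `e`. -/
def SetRel.compStabilizer {X G : Type*} [AddGroup G] (e : G → SetRel X X) (he0 : e 0 = .id)
    (hadd : ∀ a b, e a ○ e b = e (a + b)) (s : SetRel X X) : AddSubgroup G where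
  carrier := {a | e a ○ s = s}
  add_mem' {a b} (ha : e a ○ s = s) (hb : e b ○ s = s) := show e (a + b) ○ s = s by
    rw [← hadd, comp_assoc, hb, ha]
  zero_mem' := show e 0 ○ s = s by rw [he0, id_comp]
  neg_mem' {a} (ha : e a ○ s = s) := show e (-a) ○ s = s by
    conv_lhs => rw [← ha]
    rw [← comp_assoc, hadd, neg_add_cancel, he0, id_comp]

namespace IsScheme

variable {X : Type*} {S : Set (SetRel X X)} (hS : IsScheme S)
include hS

lemma inv_mem {s : SetRel X X} (hs : s ∈ S) : s.inv ∈ S := hS.2.2.2.1 s hs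

lemma id_mem : SetRel.id ∈ S := hS.2.2.1

lemma nonempty {u : SetRel X X} (hu : u ∈ S) : u.Nonempty := hS.2.1 u hu

lemma eq_of_mem {u v : SetRel X X} (hu : u ∈ S) (hv : v ∈ S) {x y : X} (hxu : (x, y) ∈ u)
    (hxv : (x, y) ∈ v) : u = v := by
  obtain ⟨w, -, hw⟩ := hS.1 x y
  rw [hw u ⟨hu, hxu⟩, hw v ⟨hv, hxv⟩]

lemma exists_mem (x y : X) : ∃ u ∈ S, (x, y) ∈ u := by
  obtain ⟨w, hw, -⟩ := hS.1 x y
  exact ⟨w, hw.1, hw.2⟩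

lemma inum_eq {a b u : SetRel X X} (ha : a ∈ S) (hb : b ∈ S) (hu : u ∈ S) {x y : X}
    (hxy : (x, y) ∈ u) : inum a b u = Nat.card {z : X | (x, z) ∈ a ∧ (z, y) ∈ b} := by
  have : {n | ∃ p ∈ u, n = Nat.card {z : X | (p.1, z) ∈ a ∧ (z, p.2) ∈ b}} =
      {Nat.card {z : X | (x, z) ∈ a ∧ (z, y) ∈ b}} := by
    ext n
    constructor
    · rintro ⟨p, hp, rfl⟩
      exact hS.2.2.2.2 a ha b hb u hu p hp (x, y) hxy
    · rintro rfl
      exact ⟨(x, y), hxy, rfl⟩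
  rw [inum, this, csSup_singleton]

variable [Finite X]

lemma inum_ne_zero_iff_mem {a b u : SetRel X X} (ha : a ∈ S) (hb : b ∈ S) (hu : u ∈ S) {x y : X}
    (hxy : (x, y) ∈ u) : inum a b u ≠ 0 ↔ (x, y) ∈ a ○ b := by
  rw [hS.inum_eq ha hb hu hxy, Nat.card_ne_zero, and_iff_left (Subtype.finite (α := X)),
    Set.nonempty_coe_sort]
  rfl

lemma inum_ne_zero_iff_subset {a b u : SetRel X X} (ha : a ∈ S) (hb : b ∈ S) (hu : u ∈ S) :
    inum a b u ≠ 0 ↔ u ⊆ a ○ b := by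
  obtain ⟨⟨x, y⟩, hxy⟩ := hS.nonempty hu
  exact ⟨fun h ⟨_, _⟩ h' => (hS.inum_ne_zero_iff_mem ha hb hu h').mp h,
    fun h => (hS.inum_ne_zero_iff_mem ha hb hu hxy).mpr (h hxy)⟩

lemma subset_comp_of_mem {a b u : SetRel X X} (ha : a ∈ S) (hb : b ∈ S) (hu : u ∈ S) {x y : X}
    (hxy : (x, y) ∈ u) (h : (x, y) ∈ a ○ b) : u ⊆ a ○ b :=
  (hS.inum_ne_zero_iff_subset ha hb hu).mp ((hS.inum_ne_zero_iff_mem ha hb hu hxy).mpr h)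

lemma id_subset_comp_inv {s : SetRel X X} (hs : s ∈ S) : SetRel.id ⊆ s ○ s.inv := by
  obtain ⟨⟨x₀, y₀⟩, h₀⟩ := hS.nonempty hs
  exact hS.subset_comp_of_mem hs (hS.inv_mem hs) hS.id_mem (show (x₀, x₀) ∈ SetRel.id from rfl)
    ⟨y₀, h₀, h₀⟩

lemma exists_mem_right {s : SetRel X X} (hs : s ∈ S) (x : X) : ∃ y, (x, y) ∈ s := by
  obtain ⟨y, hy, -⟩ := hS.id_subset_comp_inv hs (show (x, x) ∈ SetRel.id from rfl)
  exact ⟨y, hy⟩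

lemma exists_mem_left {s : SetRel X X} (hs : s ∈ S) (y : X) : ∃ x, (x, y) ∈ s :=
  hS.exists_mem_right (hS.inv_mem hs) y

lemma comp_mem_of_isThin_left {t u : SetRel X X} (ht : t ∈ S) (htt : t.IsThin) (hu : u ∈ S) :
    t ○ u ∈ S := by
  -- `t ○ u` is a union of relations of `S`; thinness of `t` puts it inside the relation `r`
  -- through one of its pairs.
  obtain ⟨⟨z, y⟩, hzy⟩ := hS.nonempty hu
  obtain ⟨x, hxz⟩ := htt.exists_mem_left z
  obtain ⟨r, hr, hxy⟩ := hS.exists_mem x y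
  have hr_sub : r ⊆ t ○ u := hS.subset_comp_of_mem ht hu hr hxy ⟨z, hxz, hzy⟩
  have hu_sub : u ⊆ t.inv ○ r := hS.subset_comp_of_mem (hS.inv_mem ht) hr hu hzy ⟨x, hxz, hxy⟩
  have hsub_r : t ○ u ⊆ r := by
    simpa only [htt.comp_inv_cancel_left] using SetRel.comp_subset_comp_right (R := t) hu_sub
  rwa [hsub_r.antisymm hr_sub]

lemma comp_mem_of_isThin_right {t u : SetRel X X} (hu : u ∈ S) (ht : t ∈ S) (htt : t.IsThin) :
    u ○ t ∈ S := by
  simpa only [inv_comp, SetRel.inv_inv] using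
    hS.inv_mem (hS.comp_mem_of_isThin_left (hS.inv_mem ht) htt.inv (hS.inv_mem hu))

lemma mem_cprod_iff {P Q : Set (SetRel X X)} (hP : P ⊆ S) (hQ : Q ⊆ S)
    (hPQ : ∀ a ∈ P, ∀ b ∈ Q, a ○ b ∈ S) {v : SetRel X X} :
    v ∈ cprod S P Q ↔ ∃ a ∈ P, ∃ b ∈ Q, v = a ○ b := by
  constructor
  · rintro ⟨hv, a, ha, b, hb, h⟩
    obtain ⟨⟨x, y⟩, hxy⟩ := hS.nonempty hv
    refine ⟨a, ha, b, hb, hS.eq_of_mem hv (hPQ a ha b hb) hxy ?_⟩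
    exact (hS.inum_ne_zero_iff_subset (hP ha) (hQ hb) hv).mp h hxy
  · rintro ⟨a, ha, b, hb, rfl⟩
    exact ⟨hPQ a ha b hb, a, ha, b, hb,
      (hS.inum_ne_zero_iff_subset (hP ha) (hQ hb) (hPQ a ha b hb)).mpr subset_rfl⟩

lemma cprod_singleton_of_isThin {t u : SetRel X X} (ht : t ∈ S) (htt : t.IsThin) (hu : u ∈ S) :
    cprod S {t} {u} = {t ○ u} := by
  ext v
  rw [hS.mem_cprod_iff (Set.singleton_subset_iff.mpr ht) (Set.singleton_subset_iff.mpr hu)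
    fun a ha b hb => ha ▸ hb ▸ hS.comp_mem_of_isThin_left ht htt hu]
  simp only [Set.mem_singleton_iff, exists_eq_left]

end IsScheme

section StronglyNormal

variable {X : Type*} {S T : Set (SetRel X X)}

lemma cprod_mono {P P' Q Q' : Set (SetRel X X)} (hP : P ⊆ P') (hQ : Q ⊆ Q') :
    cprod S P Q ⊆ cprod S P' Q' := by
  rintro v ⟨hv, a, ha, b, hb, h⟩
  exact ⟨hv, a, hP ha, b, hQ hb, h⟩

lemma isStronglyNormal_self (hS : S.Nonempty) : IsStronglyNormal S S :=
  ⟨⟨hS, subset_rfl, fun _ hu => hu.1⟩, fun _ _ _ hu => hu.1⟩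

lemma thinResidue_subset {W : Set (SetRel X X)} (hW : IsStronglyNormal S W) :
    thinResidue S ⊆ W :=
  Set.sInter_subset_of_mem hW

lemma IsScheme.thinResidue_subset_self (hS : IsScheme S) : thinResidue S ⊆ S :=
  thinResidue_subset (isStronglyNormal_self ⟨_, hS.id_mem⟩)

lemma isStronglyNormal_thinResidue (hS : S.Nonempty) (hne : (thinResidue S).Nonempty) :
    IsStronglyNormal S (thinResidue S) := by
  have hmem : ∀ {v}, (∀ W, IsStronglyNormal S W → v ∈ W) → v ∈ thinResidue S :=
    Set.mem_sInter.mpr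
  refine ⟨⟨hne, thinResidue_subset (isStronglyNormal_self hS), fun v hv => ?_⟩, fun s hs v hv => ?_⟩
  · exact hmem fun W hW =>
      hW.1.2.2 (cprod_mono (thinResidue_subset hW) (thinResidue_subset hW) hv)
  · exact hmem fun W hW =>
      hW.2 s hs (cprod_mono (cprod_mono subset_rfl (thinResidue_subset hW)) subset_rfl hv)

lemma IsStronglyNormal.subset (hT : IsStronglyNormal S T) : T ⊆ S := hT.1.2.1

lemma IsStronglyNormal.mem_of_mem_inv_comp_comp [Finite X] (hS : IsScheme S)
    (hT : IsStronglyNormal S T) {w t v : SetRel X X} (hw : w ∈ S) (ht : t ∈ T) (hv : v ∈ S)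
    {x y : X} (hxy : (x, y) ∈ v) (h : (x, y) ∈ w.inv ○ t ○ w) : v ∈ T := by
  obtain ⟨z, hxz, hzy⟩ := h
  obtain ⟨r, hr, hxz_r⟩ := hS.exists_mem x z
  refine hT.2 w hw ⟨hv, r, ⟨hr, w.inv, rfl, t, ht, ?_⟩, w, rfl, ?_⟩
  · exact (hS.inum_ne_zero_iff_mem (hS.inv_mem hw) (hT.subset ht) hr hxz_r).mpr hxz
  · exact (hS.inum_ne_zero_iff_mem hr hw hv hxy).mpr ⟨z, hxz_r, hzy⟩

lemma isStronglyNormal_singleton_id [Finite X] (hS : IsScheme S) (hthin : ∀ u ∈ S, u.IsThin) :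
    IsStronglyNormal S {SetRel.id} := by
  have hprod : ∀ a ∈ S, ∀ b ∈ S, a ○ b ∈ S := fun a ha b hb =>
    hS.comp_mem_of_isThin_left ha (hthin a ha) hb
  have hid : {SetRel.id} ⊆ S := Set.singleton_subset_iff.mpr hS.id_mem
  have hmem : ∀ {P Q} {v : SetRel X X}, P ⊆ S → Q ⊆ S →
      (v ∈ cprod S P Q ↔ ∃ a ∈ P, ∃ b ∈ Q, v = a ○ b) := fun hP hQ =>
    hS.mem_cprod_iff hP hQ fun a ha b hb => hprod a (hP ha) b (hQ hb)
  refine ⟨⟨Set.singleton_nonempty _, hid, fun v hv => ?_⟩, fun u hu v hv => ?_⟩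
  · obtain ⟨_, rfl, _, rfl, rfl⟩ := (hmem hid hid).mp hv
    exact id_comp _
  · have hinv : {SetRel.inv u} ⊆ S := Set.singleton_subset_iff.mpr (hS.inv_mem hu)
    obtain ⟨_, ha, _, rfl, rfl⟩ := (hmem (fun _ h => h.1) (Set.singleton_subset_iff.mpr hu)).mp hv
    obtain ⟨_, rfl, _, rfl, rfl⟩ := (hmem hinv hid).mp ha
    rw [comp_id]
    exact (hthin _ hu).2

end StronglyNormal

def dcoset {X : Type*} (S T : Set (SetRel X X)) (u : SetRel X X) : Set (SetRel X X) :=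
  cprod S (cprod S T {u}) T

def dcosets {X : Type*} (S T : Set (SetRel X X)) : Set (Set (SetRel X X)) :=
  {C | ∃ u ∈ S, C = dcoset S T u}

/-- `C · r`, written as a union so that no representative of `C` has to be chosen. -/
def dcosetMul {X : Type*} (S T : Set (SetRel X X)) (r : SetRel X X) (C : Set (SetRel X X)) :
    Set (SetRel X X) :=
  ⋃ u ∈ C, dcoset S T (u ○ r)

structure IsThinNormal {X : Type*} (S T : Set (SetRel X X)) : Prop where
  stronglyNormal : IsStronglyNormal S T
  id_mem : SetRel.id ∈ T
  inv_mem : ∀ t ∈ T, t.inv ∈ T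
  isThin : ∀ t ∈ T, t.IsThin

namespace IsThinNormal

variable {X : Type*} [Finite X] {S T : Set (SetRel X X)} (hS : IsScheme S) (hT : IsThinNormal S T)
include hS hT

omit hS [Finite X] in
lemma subset : T ⊆ S := hT.stronglyNormal.subset

lemma comp_mem {t t' : SetRel X X} (ht : t ∈ T) (ht' : t' ∈ T) : t ○ t' ∈ T := by
  refine hT.stronglyNormal.1.2.2
    ((hS.mem_cprod_iff hT.subset hT.subset ?_).mpr ⟨t, ht, t', ht', rfl⟩)
  exact fun a ha b hb => hS.comp_mem_of_isThin_left (hT.subset ha) (hT.isThin a ha) (hT.subset hb)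

lemma inv_comp_comp_mem {w t : SetRel X X} (hw : w ∈ S) (hwt : w.IsThin) (ht : t ∈ T) :
    w.inv ○ t ○ w ∈ T := by
  have hm : w.inv ○ t ○ w ∈ S := hS.comp_mem_of_isThin_right
    (hS.comp_mem_of_isThin_left (hS.inv_mem hw) hwt.inv (hT.subset ht)) hw hwt
  obtain ⟨⟨x, y⟩, hxy⟩ := hS.nonempty hm
  exact hT.stronglyNormal.mem_of_mem_inv_comp_comp hS hw ht hm hxy hxy

lemma mem_of_comp_eq_comp {u w t : SetRel X X} (hu : u ∈ S) (hw : w ∈ S) (ht : t ∈ T)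
    (h : u ○ w = t ○ u) : w ∈ T := by
  obtain ⟨⟨x, y⟩, hxy⟩ := hS.nonempty hw
  obtain ⟨z, hzx⟩ := hS.exists_mem_left hu x
  obtain ⟨m, hzm, hmy⟩ : (z, y) ∈ t ○ u := h ▸ ⟨x, hzx, hxy⟩
  exact hT.stronglyNormal.mem_of_mem_inv_comp_comp hS hu ht hw hxy ⟨m, ⟨z, hzx, hzm⟩, hmy⟩

lemma mem_dcoset_iff {u v : SetRel X X} (hu : u ∈ S) :
    v ∈ dcoset S T u ↔ ∃ t ∈ T, ∃ t' ∈ T, v = t ○ u ○ t' := by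
  have hthin : ∀ {a b}, a ∈ S → b ∈ S → a.IsThin ∨ b.IsThin → a ○ b ∈ S := fun ha hb h =>
    h.elim (hS.comp_mem_of_isThin_left ha · hb) (hS.comp_mem_of_isThin_right ha hb)
  have hTu : ∀ {w}, w ∈ cprod S T {u} ↔ ∃ t ∈ T, w = t ○ u := by
    intro w
    rw [hS.mem_cprod_iff hT.subset (Set.singleton_subset_iff.mpr hu) fun a ha b hb =>
      hthin (hT.subset ha) (hb ▸ hu) (.inl (hT.isThin a ha))]
    simp only [Set.mem_singleton_iff, exists_eq_left]
  rw [dcoset, hS.mem_cprod_iff (fun _ h => h.1) hT.subset fun a ha b hb =>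
    hthin ha.1 (hT.subset hb) (.inr (hT.isThin b hb))]
  constructor
  · rintro ⟨_, hw, t', ht', rfl⟩
    obtain ⟨t, ht, rfl⟩ := hTu.mp hw
    exact ⟨t, ht, t', ht', rfl⟩
  · rintro ⟨t, ht, t', ht', rfl⟩
    exact ⟨t ○ u, hTu.mpr ⟨t, ht, rfl⟩, t', ht', rfl⟩

lemma self_mem_dcoset {u : SetRel X X} (hu : u ∈ S) : u ∈ dcoset S T u :=
  (hT.mem_dcoset_iff hS hu).mpr ⟨_, hT.id_mem, _, hT.id_mem, by rw [id_comp, comp_id]⟩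

lemma comp_mem_dcoset {u r : SetRel X X} (hu : u ∈ S) (hr : r ∈ T) : u ○ r ∈ dcoset S T u :=
  (hT.mem_dcoset_iff hS hu).mpr ⟨_, hT.id_mem, r, hr, by rw [id_comp]⟩

lemma dcoset_eq_of_mem {u v : SetRel X X} (hu : u ∈ S) (hv : v ∈ dcoset S T u) :
    dcoset S T v = dcoset S T u := by
  have hvS : v ∈ S := hv.1
  obtain ⟨t, ht, t', ht', rfl⟩ := (hT.mem_dcoset_iff hS hu).mp hv
  ext w
  rw [hT.mem_dcoset_iff hS hvS, hT.mem_dcoset_iff hS hu]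
  constructor
  · rintro ⟨a, ha, b, hb, rfl⟩
    exact ⟨a ○ t, hT.comp_mem hS ha ht, t' ○ b, hT.comp_mem hS ht' hb, by simp only [comp_assoc]⟩
  · rintro ⟨a, ha, b, hb, rfl⟩
    refine ⟨a ○ t.inv, hT.comp_mem hS ha (hT.inv_mem t ht), t'.inv ○ b,
      hT.comp_mem hS (hT.inv_mem t' ht') hb, ?_⟩
    simp only [comp_assoc, (hT.isThin t ht).inv_comp_cancel_left,
      (hT.isThin t' ht').comp_inv_cancel_left]

lemma dcoset_comp_eq_of_mem {u v r : SetRel X X} (hu : u ∈ S) (hr : r ∈ S) (hrt : r.IsThin)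
    (hv : v ∈ dcoset S T u) : dcoset S T (v ○ r) = dcoset S T (u ○ r) := by
  obtain ⟨t, ht, t', ht', rfl⟩ := (hT.mem_dcoset_iff hS hu).mp hv
  refine hT.dcoset_eq_of_mem hS (hS.comp_mem_of_isThin_right hu hr hrt) ?_
  rw [hT.mem_dcoset_iff hS (hS.comp_mem_of_isThin_right hu hr hrt)]
  refine ⟨t, ht, r.inv ○ t' ○ r, hT.inv_comp_comp_mem hS hr hrt ht', ?_⟩
  simp only [comp_assoc, hrt.comp_inv_cancel_left]

lemma mem_of_dcoset_comp_eq {u r : SetRel X X} (hu : u ∈ S) (hr : r ∈ S) (hrt : r.IsThin)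
    (h : dcoset S T (u ○ r) = dcoset S T u) : r ∈ T := by
  have hur : u ○ r ∈ dcoset S T u :=
    h ▸ hT.self_mem_dcoset hS (hS.comp_mem_of_isThin_right hu hr hrt)
  obtain ⟨t, ht, t', ht', heq⟩ := (hT.mem_dcoset_iff hS hu).mp hur
  have ht'_thin := hT.isThin t' ht'
  have hrt' : r ○ t'.inv ∈ T := by
    refine hT.mem_of_comp_eq_comp hS hu
      (hS.comp_mem_of_isThin_left hr hrt (hT.subset (hT.inv_mem t' ht'))) ht ?_
    rw [← comp_assoc, heq, ht'_thin.comp_inv_cancel_right]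
  simpa only [comp_assoc, ht'_thin.2, comp_id] using hT.comp_mem hS hrt' ht'

lemma dcosetMul_dcoset {u r : SetRel X X} (hu : u ∈ S) (hr : r ∈ S) (hrt : r.IsThin) :
    dcosetMul S T r (dcoset S T u) = dcoset S T (u ○ r) := by
  ext w
  simp only [dcosetMul, Set.mem_iUnion₂]
  constructor
  · rintro ⟨v, hv, hw⟩
    rwa [hT.dcoset_comp_eq_of_mem hS hu hr hrt hv] at hw
  · exact fun hw => ⟨u, hT.self_mem_dcoset hS hu, hw⟩

lemma dcosetMul_mem_dcosets {C : Set (SetRel X X)} (hC : C ∈ dcosets S T) {r : SetRel X X}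
    (hr : r ∈ S) (hrt : r.IsThin) : dcosetMul S T r C ∈ dcosets S T := by
  obtain ⟨u, hu, rfl⟩ := hC
  exact ⟨u ○ r, hS.comp_mem_of_isThin_right hu hr hrt, hT.dcosetMul_dcoset hS hu hr hrt⟩

lemma dcosetMul_dcosetMul {C : Set (SetRel X X)} (hC : C ∈ dcosets S T) {r r' : SetRel X X}
    (hr : r ∈ S) (hrt : r.IsThin) (hr' : r' ∈ S) (hr't : r'.IsThin) :
    dcosetMul S T r' (dcosetMul S T r C) = dcosetMul S T (r ○ r') C := by
  obtain ⟨u, hu, rfl⟩ := hC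
  rw [hT.dcosetMul_dcoset hS hu hr hrt,
    hT.dcosetMul_dcoset hS (hS.comp_mem_of_isThin_right hu hr hrt) hr' hr't,
    hT.dcosetMul_dcoset hS hu (hS.comp_mem_of_isThin_left hr hrt hr') (hrt.comp hr't), comp_assoc]

lemma dcosetMul_id {C : Set (SetRel X X)} (hC : C ∈ dcosets S T) :
    dcosetMul S T SetRel.id C = C := by
  obtain ⟨u, hu, rfl⟩ := hC
  rw [hT.dcosetMul_dcoset hS hu hS.id_mem SetRel.isThin_id, comp_id]

def dcosetPerm {r : SetRel X X} (hr : r ∈ S) (hrt : r.IsThin) : Equiv.Perm (dcosets S T) where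
  toFun C := ⟨dcosetMul S T r C, hT.dcosetMul_mem_dcosets hS C.2 hr hrt⟩
  invFun C := ⟨dcosetMul S T r.inv C, hT.dcosetMul_mem_dcosets hS C.2 (hS.inv_mem hr) hrt.inv⟩
  left_inv C := Subtype.ext <| by
    simp only [hT.dcosetMul_dcosetMul hS C.2 hr hrt (hS.inv_mem hr) hrt.inv, hrt.1,
      hT.dcosetMul_id hS C.2]
  right_inv C := Subtype.ext <| by
    simp only [hT.dcosetMul_dcosetMul hS C.2 (hS.inv_mem hr) hrt.inv hr hrt, hrt.2,
      hT.dcosetMul_id hS C.2]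

lemma exists_coe_dcosetPerm_pow {r : SetRel X X} (hr : r ∈ S) (hrt : r.IsThin) (n : ℕ) :
    ∃ r' ∈ S, r'.IsThin ∧
      ∀ C : dcosets S T, ((hT.dcosetPerm hS hr hrt ^ n) C : Set (SetRel X X)) =
        dcosetMul S T r' C := by
  induction n with
  | zero => exact ⟨_, hS.id_mem, SetRel.isThin_id, fun C => (hT.dcosetMul_id hS C.2).symm⟩
  | succ n ih =>
    obtain ⟨r', hr', hr't, h⟩ := ih
    refine ⟨r' ○ r, hS.comp_mem_of_isThin_left hr' hr't hr, hr't.comp hrt, fun C => ?_⟩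
    rw [pow_succ', Equiv.Perm.mul_apply, ← hT.dcosetMul_dcosetMul hS C.2 hr' hr't hr hrt, ← h]
    rfl

lemma dcosetPerm_ne_one {s : SetRel X X} (hs : s ∈ S) (hst : s.IsThin) (hsT : s ∉ T) :
    hT.dcosetPerm hS hs hst ≠ 1 := by
  intro h
  refine hsT (hT.mem_of_dcoset_comp_eq hS hS.id_mem hs hst ?_)
  rw [← hT.dcosetMul_dcoset hS hS.id_mem hs hst]
  exact congrArg
    (fun g : Equiv.Perm (dcosets S T) => (g ⟨_, _, hS.id_mem, rfl⟩ : Set (SetRel X X))) h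

lemma dcosetPerm_pow_eq_one_of_apply_eq {r : SetRel X X} (hr : r ∈ S) (hrt : r.IsThin) (n : ℕ)
    {C : dcosets S T} (hC : (hT.dcosetPerm hS hr hrt ^ n) C = C) :
    hT.dcosetPerm hS hr hrt ^ n = 1 := by
  obtain ⟨r', hr', hr't, hpow⟩ := hT.exists_coe_dcosetPerm_pow hS hr hrt n
  obtain ⟨u, hu, hCu⟩ := C.2
  have hr'T : r' ∈ T := by
    refine hT.mem_of_dcoset_comp_eq hS hu hr' hr't ?_
    rw [← hT.dcosetMul_dcoset hS hu hr' hr't, ← hCu, ← hpow, hC]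
  ext ⟨_, v, hv, rfl⟩ : 2
  rw [hpow, hT.dcosetMul_dcoset hS hv hr' hr't,
    hT.dcoset_eq_of_mem hS hv (hT.comp_mem_dcoset hS hv hr'T)]
  rfl

/-- `s` generates `S//T`, so every relation lies in a double coset `T sⁿ T`. -/
theorem forall_isThin_of_card_dcosets_prime (hq : (Nat.card (dcosets S T)).Prime)
    {s : SetRel X X} (hs : s ∈ S) (hst : s.IsThin) (hsT : s ∉ T) : ∀ u ∈ S, u.IsThin := by
  intro u hu
  obtain ⟨n, hn⟩ := Equiv.Perm.exists_pow_apply_eq_of_prime_card hq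
    (hT.dcosetPerm_ne_one hS hs hst hsT)
    (fun n _ => hT.dcosetPerm_pow_eq_one_of_apply_eq hS hs hst n)
    ⟨_, _, hS.id_mem, rfl⟩ ⟨_, u, hu, rfl⟩
  obtain ⟨r, hr, hrt, hpow⟩ := hT.exists_coe_dcosetPerm_pow hS hs hst n
  have hur : u ∈ dcoset S T r := by
    have h := congrArg Subtype.val hn
    rw [hpow, hT.dcosetMul_dcoset hS hS.id_mem hr hrt, id_comp] at h
    exact h ▸ hT.self_mem_dcoset hS hu
  obtain ⟨t, ht, t', ht', rfl⟩ := (hT.mem_dcoset_iff hS hr).mp hur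
  exact ((hT.isThin t ht).comp hrt).comp (hT.isThin t' ht')

end IsThinNormal

namespace IsoElemAb

variable {X : Type*} [Finite X] {S T : Set (SetRel X X)} {p : ℕ}
  {e : ZMod p × ZMod p → SetRel X X} (hS : IsScheme S) (hTS : T ⊆ S) (he : IsoElemAb S T p e)
include hS hTS he

omit hS hTS [Finite X] in
lemma map_zero : e 0 = SetRel.id := he.2.2.2.1

omit hS hTS [Finite X] in
lemma map_mem (a : ZMod p × ZMod p) : e a ∈ T := he.1 a

omit hS hTS [Finite X] in
lemma exists_map_eq {t : SetRel X X} (ht : t ∈ T) : ∃ a, e a = t := he.2.2.1 t ht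

omit hS hTS [Finite X] in
lemma injective : Function.Injective e := he.2.1

omit hS hTS [Finite X] in
lemma cprod_map_map (a b : ZMod p × ZMod p) : cprod S {e a} {e b} = {e (a + b)} := he.2.2.2.2 a b

omit hS [Finite X] in
lemma map_mem_of_subset (a : ZMod p × ZMod p) : e a ∈ S := hTS (he.map_mem a)

lemma map_comp_map_subset (a b : ZMod p × ZMod p) : e a ○ e b ⊆ e (a + b) := by
  rintro ⟨x, y⟩ hxy
  obtain ⟨r, hr, hxy_r⟩ := hS.exists_mem x y
  have hr_mem : r ∈ cprod S {e a} {e b} := ⟨hr, e a, rfl, e b, rfl,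
    (hS.inum_ne_zero_iff_mem (he.map_mem_of_subset hTS a) (he.map_mem_of_subset hTS b) hr
      hxy_r).mpr hxy⟩
  rw [he.cprod_map_map a b, Set.mem_singleton_iff] at hr_mem
  exact hr_mem ▸ hxy_r

lemma inv_map (a : ZMod p × ZMod p) : (e a).inv = e (-a) := by
  have hid : SetRel.id ∈ cprod S {e a} {e (-a)} := by
    rw [he.cprod_map_map, add_neg_cancel, he.map_zero]
    rfl
  obtain ⟨-, _, rfl, _, rfl, h⟩ := hid
  obtain ⟨⟨x, y⟩, hxy⟩ := hS.nonempty hS.id_mem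
  have hmem := he.map_mem_of_subset hTS
  obtain ⟨z, hxz, hzy⟩ := (hS.inum_ne_zero_iff_subset (hmem a) (hmem (-a)) hS.id_mem).mp h hxy
  cases (hxy : x = y)
  exact hS.eq_of_mem (hS.inv_mem (hmem a)) (hmem (-a)) hxz hzy

lemma isThin_map (a : ZMod p × ZMod p) : (e a).IsThin := by
  have hid : ∀ b, e b ○ (e b).inv = SetRel.id := fun b => by
    refine subset_antisymm ?_ (hS.id_subset_comp_inv (he.map_mem_of_subset hTS b))
    rw [he.inv_map hS hTS, ← he.map_zero, ← add_neg_cancel b]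
    exact he.map_comp_map_subset hS hTS b (-b)
  refine ⟨hid a, ?_⟩
  simpa only [he.inv_map hS hTS, neg_neg] using hid (-a)

lemma map_comp_map (a b : ZMod p × ZMod p) : e a ○ e b = e (a + b) := by
  have hm := hS.comp_mem_of_isThin_left (he.map_mem_of_subset hTS a) (he.isThin_map hS hTS a)
    (he.map_mem_of_subset hTS b)
  obtain ⟨⟨x, y⟩, hxy⟩ := hS.nonempty hm
  exact hS.eq_of_mem hm (he.map_mem_of_subset hTS (a + b)) hxy
    (he.map_comp_map_subset hS hTS a b hxy)

omit hTS in
lemma isThinNormal (hT : IsStronglyNormal S T) : IsThinNormal S T where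
  stronglyNormal := hT
  id_mem := he.map_zero ▸ he.map_mem 0
  inv_mem t ht := by
    obtain ⟨a, rfl⟩ := he.exists_map_eq ht
    rw [he.inv_map hS hT.subset]
    exact he.map_mem _
  isThin t ht := by
    obtain ⟨a, rfl⟩ := he.exists_map_eq ht
    exact he.isThin_map hS hT.subset a

end IsoElemAb

namespace IsoElemAb

variable {X : Type*} {S T : Set (SetRel X X)} {p : ℕ} {e : ZMod p × ZMod p → SetRel X X}
  [Finite X] (hS : IsScheme S) (he : IsoElemAb S T p e)
include hS he

lemma isThinNormal_of_thinResidue_eq (hT : thinResidue S = T) : IsThinNormal S T :=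
  he.isThinNormal hS (hT ▸ isStronglyNormal_thinResidue ⟨_, hS.id_mem⟩ (hT ▸ ⟨e 0, he.map_mem 0⟩))

/-- A thin relation outside `T` would make all of `S` thin, hence `{1_X}` strongly normal and
the thin residue `T ≅ C_p × C_p` trivial. -/
lemma mem_of_isThin (hp : p.Prime) (hT : thinResidue S = T)
    (hq : (Nat.card (dcosets S T)).Prime) {s : SetRel X X} (hs : s ∈ S) (hst : s.IsThin) :
    s ∈ T := by
  by_contra hsT
  have hall := (he.isThinNormal_of_thinResidue_eq hS hT).forall_isThin_of_card_dcosets_prime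
    hS hq hs hst hsT
  have hsub : T ⊆ {SetRel.id} := hT ▸ thinResidue_subset (isStronglyNormal_singleton_id hS hall)
  have h10 : e (1, 0) = e 0 := (hsub (he.map_mem _)).trans he.map_zero.symm
  have : Fact (1 < p) := ⟨hp.one_lt⟩
  exact one_ne_zero (congrArg Prod.fst (he.injective h10))

lemma exists_ne_zero_comp_eq_self (hp : p.Prime) (hT : thinResidue S = T)
    (hq : (Nat.card (dcosets S T)).Prime) {s : SetRel X X} (hs : s ∈ S) (hsT : s ∉ T) :
    ∃ c ≠ 0, e c ○ s = s := by
  have hN := he.isThinNormal_of_thinResidue_eq hS hT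
  have hTS : T ⊆ S := hT ▸ hS.thinResidue_subset_self
  -- `s` is not injective, otherwise it would be thin; a pair `x ≠ x'` with a common image lies in a
  -- relation of `s ○ s.inv`, hence in `T`, and that relation fixes `s`.
  have hninj : ¬ ∀ x x' z, (x, z) ∈ s → (x', z) ∈ s → x = x' := fun h =>
    hsT (he.mem_of_isThin hS hp hT hq hs (SetRel.isThin_of_comp_inv_eq_id (subset_antisymm
      (fun ⟨x, x'⟩ ⟨z, hxz, hx'z⟩ => h x x' z hxz hx'z) (hS.id_subset_comp_inv hs))))
  push Not at hninj
  obtain ⟨x, x', z, hxz, hx'z, hne⟩ := hninj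
  obtain ⟨w, hw, hxx'⟩ := hS.exists_mem x x'
  obtain ⟨c, rfl⟩ := he.exists_map_eq <| hN.stronglyNormal.mem_of_mem_inv_comp_comp hS
    (hS.inv_mem hs) hN.id_mem hw hxx' ⟨z, ⟨z, hxz, rfl⟩, hx'z⟩
  refine ⟨c, ?_, ?_⟩
  · rintro rfl
    rw [he.map_zero] at hxx'
    exact hne hxx'
  · have hm := hS.comp_mem_of_isThin_left (he.map_mem_of_subset hTS c) (he.isThin_map hS hTS c) hs
    exact hS.eq_of_mem hm hs ⟨x', hxx', hx'z⟩ hxz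

lemma comp_eq_self_iff [NeZero p] (φ : AddChar (ZMod p × ZMod p) ℂ) (hp : p.Prime)
    (hT : thinResidue S = T)
    (hq : (Nat.card (dcosets S T)).Prime) (hφ : φ ≠ 1) {s : SetRel X X} (hs : s ∈ S \ T)
    (h : ∀ a, e a ○ s = s → φ a = 1) (a : ZMod p × ZMod p) : e a ○ s = s ↔ φ a = 1 := by
  have hTS : T ⊆ S := hT ▸ hS.thinResidue_subset_self
  set H := SetRel.compStabilizer e he.map_zero (he.map_comp_map hS hTS) s
  have hker : ∀ a, a ∈ φ.toAddMonoidHom.ker ↔ φ a = 1 := fun a => by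
    rw [AddMonoidHom.mem_ker, AddChar.toAddMonoidHom_apply, ofMul_eq_zero]
  have hHK : H = φ.toAddMonoidHom.ker := by
    refine AddSubgroup.eq_of_le_of_ne_bot_of_ne_top hp ?_ (fun a ha => (hker a).mpr (h a ha))
      ?_ ?_
    · rw [Nat.card_prod, Nat.card_zmod, sq]
    · obtain ⟨c, hc, hcs⟩ := he.exists_ne_zero_comp_eq_self hS hp hT hq hs.1 hs.2
      exact AddSubgroup.ne_bot_iff_exists_ne_zero.mpr
        ⟨⟨c, hcs⟩, fun h0 => hc (congrArg Subtype.val h0)⟩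
    · intro htop
      exact hφ (AddChar.eq_one_iff.mpr fun a => (hker a).mp (htop ▸ AddSubgroup.mem_top a))
  exact (SetLike.ext_iff.mp hHK a).trans (hker a)

end IsoElemAb

namespace IsoElemAb

variable {X : Type*} [Fintype X] {S T : Set (SetRel X X)} {p : ℕ} [NeZero p]
  {e : ZMod p × ZMod p → SetRel X X} (hS : IsScheme S) (hTS : T ⊆ S) (he : IsoElemAb S T p e)
  (φ : AddChar (ZMod p × ZMod p) ℂ)
include hS hTS he

lemma eIdem_mul_adjMat_map (a : ZMod p × ZMod p) :
    eIdem p φ e * adjMat (e a) = φ a • eIdem p φ e := by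
  have hterm : ∀ b, (φ (-b) • adjMat (e b)) * adjMat (e a) = φ (-b) • adjMat (e (b + a)) :=
    fun b => by
      rw [Matrix.smul_mul, adjMat_mul_of_isThin_left (he.isThin_map hS hTS b),
        he.map_comp_map hS hTS]
  have hshift : ∑ b, φ (-b) • adjMat (e (b + a)) = φ a • ∑ c, φ (-c) • adjMat (e c) := by
    rw [Finset.smul_sum]
    refine Fintype.sum_equiv (Equiv.addRight a) _ _ fun b => ?_
    rw [Equiv.coe_addRight, smul_smul, ← AddChar.map_add_eq_mul, show a + -(b + a) = -b by abel]
  rw [eIdem, Matrix.smul_mul, Finset.sum_mul, Finset.sum_congr rfl fun b _ => hterm b, hshift,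
    smul_comm]

lemma eIdem_mul_adjMat_eq_zero_of_comp_eq {u : SetRel X X} {a : ZMod p × ZMod p} (ha : e a ○ u = u)
    (hφa : φ a ≠ 1) : eIdem p φ e * adjMat u = 0 := by
  have hfix : eIdem p φ e * adjMat u = φ a • (eIdem p φ e * adjMat u) := by
    conv_lhs => rw [← ha, ← adjMat_mul_of_isThin_left (he.isThin_map hS hTS a), ← mul_assoc,
      he.eIdem_mul_adjMat_map hS hTS φ a, Matrix.smul_mul]
  have : (1 - φ a) • (eIdem p φ e * adjMat u) = 0 := by
    rw [sub_smul, one_smul, ← hfix, sub_self]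
  exact (smul_eq_zero.mp this).resolve_left (sub_ne_zero.mpr hφa.symm)

lemma eIdem_mul_adjMat_apply_ne_zero {u : SetRel X X} (hu : u ∈ S)
    (h : ∀ a, e a ○ u = u → φ a = 1) {x y : X} (hxy : (x, y) ∈ u) :
    (eIdem p φ e * adjMat u) x y ≠ 0 := by
  set H := SetRel.compStabilizer e he.map_zero (he.map_comp_map hS hTS) u
  have hentry : ∀ a, φ (-a) • adjMat (e a ○ u) x y = if a ∈ H then 1 else 0 := fun a => by
    have hmem : (x, y) ∈ e a ○ u ↔ a ∈ H :=
      ⟨fun h' => hS.eq_of_mem (hS.comp_mem_of_isThin_left (he.map_mem_of_subset hTS a)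
        (he.isThin_map hS hTS a) hu) hu h' hxy, fun h' => by rwa [show e a ○ u = u from h']⟩
    by_cases ha : a ∈ H
    · simp [adjMat, hmem.mpr ha, ha, h (-a) (H.neg_mem ha)]
    · simp [adjMat, mt hmem.mp ha, ha]
  simp only [eIdem, Matrix.smul_mul, Finset.sum_mul,
    adjMat_mul_of_isThin_left (he.isThin_map hS hTS _),
    Matrix.smul_apply, Matrix.sum_apply, hentry, Finset.sum_boole, smul_eq_mul]
  refine mul_ne_zero (by simp [NeZero.ne p]) (Nat.cast_ne_zero.mpr ?_)
  exact Finset.card_ne_zero_of_mem (Finset.mem_filter.mpr ⟨Finset.mem_univ _, H.zero_mem⟩)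

lemma eIdem_mul_adjMat_ne_zero_iff {u : SetRel X X} (hu : u ∈ S) :
    eIdem p φ e * adjMat u ≠ 0 ↔ ∀ a, e a ○ u = u → φ a = 1 := by
  refine ⟨fun h a ha => by_contra fun hφa =>
    h (he.eIdem_mul_adjMat_eq_zero_of_comp_eq hS hTS φ ha hφa), fun h h0 => ?_⟩
  obtain ⟨⟨x, y⟩, hxy⟩ := hS.nonempty hu
  exact he.eIdem_mul_adjMat_apply_ne_zero hS hTS φ hu h hxy (by rw [h0]; rfl)

lemma eIdem_mul_adjMat_eq_zero_of_mem_dcoset (hN : IsThinNormal S T) {s u : SetRel X X}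
    (hs : s ∈ S) (hu : u ∈ dcoset S T s) (h : eIdem p φ e * adjMat s = 0) :
    eIdem p φ e * adjMat u = 0 := by
  obtain ⟨t, ht, t', ht', rfl⟩ := (hN.mem_dcoset_iff hS hs).mp hu
  obtain ⟨b, rfl⟩ := he.exists_map_eq ht
  rw [← adjMat_mul_of_isThin_right (hN.isThin t' ht'),
    ← adjMat_mul_of_isThin_left (he.isThin_map hS hTS b), ← mul_assoc, ← mul_assoc,
    he.eIdem_mul_adjMat_map hS hTS φ b, Matrix.smul_mul, h, smul_zero, zero_mul]

end IsoElemAb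

theorem stmt9_general {X : Type*} [Fintype X] (p q : ℕ) [NeZero p]
    (hp : p.Prime) (hq : q.Prime)
    (S T : Set (Set (X × X))) (hS : IsScheme S) (hT : thinResidue S = T)
    (e : ZMod p × ZMod p → Set (X × X)) (he : IsoElemAb S T p e)
    (hquot : Nat.card {C : Set (Set (X × X)) | ∃ s ∈ S, C = cprod S (cprod S T {s}) T} = q)
    (φ : AddChar (ZMod p × ZMod p) ℂ) (hφ : φ ≠ 1)
    (s : Set (X × X)) (hs : s ∈ S \ T) :
    ((∀ a, (cprod S {e a} {s} = {s} ↔ φ a = 1)) ↔ eIdem p φ e * adjMat s ≠ 0) ∧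
    (eIdem p φ e * adjMat s ≠ 0 ↔
      ∃ u ∈ cprod S (cprod S T {s}) T, eIdem p φ e * adjMat u ≠ 0) := by
  have hTS : T ⊆ S := hT ▸ hS.thinResidue_subset_self
  have hN := he.isThinNormal_of_thinResidue_eq hS hT
  have hq' : (Nat.card (dcosets S T)).Prime := hquot ▸ hq
  have hstab : ∀ a, cprod S {e a} {s} = {s} ↔ e a ○ s = s := fun a => by
    rw [hS.cprod_singleton_of_isThin (he.map_mem_of_subset hTS a) (he.isThin_map hS hTS a) hs.1,
      Set.singleton_eq_singleton_iff]
  have hmaster := he.eIdem_mul_adjMat_ne_zero_iff hS hTS φ hs.1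
  refine ⟨⟨fun h => hmaster.mpr fun a ha => (h a).mp ((hstab a).mpr ha), fun h a => ?_⟩,
    ⟨fun h => ⟨s, hN.self_mem_dcoset hS hs.1, h⟩, fun ⟨u, hu, hu0⟩ h0 => ?_⟩⟩
  · exact (hstab a).trans (he.comp_eq_self_iff hS φ hp hT hq' hφ hs (hmaster.mp h) a)
  · exact hu0 (he.eIdem_mul_adjMat_eq_zero_of_mem_dcoset hS hTS φ hN hs.1 hu h0)

/-- for nonprincipal `φ ∈ Irr(T)` and `s ∈ S \\ T`:
`L(s) = Ker φ` ⟺ `e_φ σ_s ≠ 0` ⟺ `ℂe_φ ⊗ ℂ(TsT) ≠ 0`. -/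
theorem stmt9 {X : Type*} [Fintype X] [DecidableEq X] (p q : ℕ) [NeZero p]
    (hp : p.Prime) (hq : q.Prime)
    (S T : Set (Set (X × X))) (hS : IsScheme S) (hT : thinResidue S = T)
    (e : ZMod p × ZMod p → Set (X × X)) (he : IsoElemAb S T p e)
    (hquot : Nat.card {C : Set (Set (X × X)) | ∃ s ∈ S, C = cprod S (cprod S T {s}) T} = q)
    (φ : AddChar (ZMod p × ZMod p) ℂ) (hφ : φ ≠ 1)
    (s : Set (X × X)) (hs : s ∈ S \ T) :
    ((∀ a, (cprod S {e a} {s} = {s} ↔ φ a = 1)) ↔ eIdem p φ e * adjMat s ≠ 0) ∧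
    (eIdem p φ e * adjMat s ≠ 0 ↔
      ∃ u ∈ cprod S (cprod S T {s}) T, eIdem p φ e * adjMat u ≠ 0) :=
  stmt9_general p q hp hq S T hS hT e he hquot φ hφ s hs
end

section
/- Let (X,S) be an association scheme, T a closed subset of S with cosets X₁,...,X_m in X. Suppose ι₁,...,ι_m ∈ Aut(T) (intersection-number-preserving permutations of T) are such that each extension ι̃_j fixing every element of S \ T and acting as ι_j on T is an algebraic automorphism of S. Define S' = {s' | s ∈ S} where s' = s for s ∈ S \ T and s' = ⋃_{j=1}^m (s^{ι_j} ∩ (X_j × X_j)) for s ∈ T. Then (X, S') is an association scheme algebraically isomorphic to (X, S). -/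
open scoped Classical

/-- The extension of a permutation `ι` of `T` to `S`, fixing `S \\ T` pointwise. -/
noncomputable def extOf {X : Type*} (T : Set (Set (X × X)))
    (ι : Set (X × X) → Set (X × X)) (s : Set (X × X)) : Set (X × X) :=
  if s ∈ T then ι s else s

/-- The relation `s'` of Theorem 1: glue the automorphisms `ι_j` on the cosets `X_j`. -/
noncomputable def primeOf {X : Type*} (T : Set (Set (X × X))) (m : ℕ) (Xc : Fin m → Set X)
    (ι : Fin m → Set (X × X) → Set (X × X)) (s : Set (X × X)) : Set (X × X) :=
  if s ∈ T then ⋃ j : Fin m, (ι j s ∩ (Xc j ×ˢ Xc j)) else s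

section SchemeHelpers
variable {X : Type*} [Fintype X] {S T : Set (Set (X × X))}

lemma conv_conv' (s : Set (X × X)) : conv (conv s) = s := rfl

lemma inum_eq (hS : IsScheme S) {u v w : Set (X × X)} (hu : u ∈ S) (hv : v ∈ S) (hw : w ∈ S)
    {x y : X} (hp : (x, y) ∈ w) :
    inum u v w = Nat.card {z : X | (x, z) ∈ u ∧ (z, y) ∈ v} := by
  have h : {n | ∃ p ∈ w, n = Nat.card {z : X | (p.1, z) ∈ u ∧ (z, p.2) ∈ v}} =
      {Nat.card {z : X | (x, z) ∈ u ∧ (z, y) ∈ v}} := by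
    ext n
    constructor
    · rintro ⟨q, hq, rfl⟩
      exact hS.2.2.2.2 u hu v hv w hw q hq (x, y) hp
    · rintro rfl; exact ⟨(x, y), hp, rfl⟩
  rw [inum, h, csSup_singleton]

lemma inum_ne_zero' (hS : IsScheme S) {u v w : Set (X × X)} (hu : u ∈ S) (hv : v ∈ S)
    (hw : w ∈ S) {x y z : X} (hp : (x, y) ∈ w) (h1 : (x, z) ∈ u) (h2 : (z, y) ∈ v) :
    inum u v w ≠ 0 := by
  rw [inum_eq hS hu hv hw hp]
  have : Nonempty {z' : X | (x, z') ∈ u ∧ (z', y) ∈ v} := ⟨⟨z, h1, h2⟩⟩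
  exact Nat.card_ne_zero.mpr ⟨this, inferInstance⟩

lemma exists_of_inum (hS : IsScheme S) {u v w : Set (X × X)} (hu : u ∈ S) (hv : v ∈ S)
    (hw : w ∈ S) {x y : X} (hp : (x, y) ∈ w) (h : inum u v w ≠ 0) :
    ∃ z, (x, z) ∈ u ∧ (z, y) ∈ v := by
  rw [inum_eq hS hu hv hw hp] at h
  obtain ⟨z⟩ := (Nat.card_ne_zero.mp h).1
  exact ⟨z, z.2⟩

lemma rel_unique (hS : IsScheme S) {s t : Set (X × X)} (hs : s ∈ S) (ht : t ∈ S)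
    {x y : X} (hxs : (x, y) ∈ s) (hxt : (x, y) ∈ t) : s = t := by
  obtain ⟨r, -, hr⟩ := hS.1 x y
  rw [hr s ⟨hs, hxs⟩, hr t ⟨ht, hxt⟩]

lemma exists_succ (hS : IsScheme S) {s : Set (X × X)} (hs : s ∈ S) (x : X) :
    ∃ y, (x, y) ∈ s := by
  obtain ⟨⟨a, b⟩, hab⟩ := hS.2.1 s hs
  have h : inum s (conv s) (diagRel X) ≠ 0 :=
    inum_ne_zero' hS hs (hS.2.2.2.1 s hs) hS.2.2.1 (show (a, a) ∈ diagRel X from rfl) hab hab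
  obtain ⟨z, hz, -⟩ := exists_of_inum hS hs (hS.2.2.2.1 s hs) hS.2.2.1
    (show (x, x) ∈ diagRel X from rfl) h
  exact ⟨z, hz⟩

lemma closed_conv (hS : IsScheme S) (hT : IsClosedSub S T) {t : Set (X × X)} (ht : t ∈ T) :
    diagRel X ∈ T ∧ conv t ∈ T := by
  have htS : t ∈ S := hT.2.1 ht
  have hsucc : ∀ x : X, ∃ y, (x, y) ∈ t := exists_succ hS htS
  choose σ hσ using hsucc
  have step : ∀ n : ℕ, ∀ x : X, ∀ r ∈ S, (x, σ^[n + 1] x) ∈ r → r ∈ T := by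
    intro n
    induction n with
    | zero =>
      intro x r hrS hr
      have h1 : (x, σ^[1] x) ∈ t := by simpa using hσ x
      rwa [rel_unique hS hrS htS hr h1]
    | succ n ih =>
      intro x r hrS hr
      obtain ⟨u, ⟨huS, huxy⟩, -⟩ := hS.1 x (σ^[n + 1] x)
      have huT : u ∈ T := ih x u huS huxy
      apply hT.2.2
      refine ⟨hrS, u, huT, t, ht, ?_⟩
      have h2 : (σ^[n + 1] x, σ^[n + 2] x) ∈ t := by
        rw [Function.iterate_succ_apply' σ (n + 1) x]
        exact hσ _
      exact inum_ne_zero' hS huS htS hrS hr huxy h2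
  obtain ⟨⟨a, b⟩, hab⟩ := hS.2.1 t htS
  obtain ⟨i, k, hik, heq⟩ := Finite.exists_ne_map_eq_of_infinite (fun n : ℕ => σ^[n] a)
  wlog hlt : i < k generalizing i k
  · exact this k i hik.symm heq.symm (by omega)
  set xi := σ^[i] a with hxi
  have hcycle : σ^[k - i] xi = xi := by
    rw [hxi, ← Function.iterate_add_apply, Nat.sub_add_cancel hlt.le]
    exact heq.symm
  obtain ⟨d, hd⟩ : ∃ d, k - i = d + 1 := ⟨k - i - 1, by omega⟩
  have hdiag : diagRel X ∈ T := by
    have : (xi, σ^[d + 1] xi) ∈ diagRel X := by rw [← hd, hcycle]; rfl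
    exact step d xi _ hS.2.2.1 this
  refine ⟨hdiag, ?_⟩
  set y := σ^[d] xi with hy
  have hyx : (y, xi) ∈ t := by
    have : σ y = xi := by
      rw [hy, ← Function.iterate_succ_apply' σ d xi]
      show σ^[d + 1] xi = xi
      rw [← hd, hcycle]
    rw [← this]; exact hσ y
  have hconvmem : (xi, y) ∈ conv t := hyx
  have hconvS : conv t ∈ S := hS.2.2.2.1 t htS
  rcases Nat.eq_zero_or_pos d with h0 | hpos
  · have hyxi : y = xi := by rw [hy, h0]; rfl
    have : conv t = diagRel X :=
      rel_unique hS hconvS hS.2.2.1 hconvmem (by rw [hyxi]; rfl)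
    rw [this]; exact hdiag
  · obtain ⟨e, he⟩ : ∃ e, d = e + 1 := ⟨d - 1, by omega⟩
    obtain ⟨r, ⟨hrS, hrmem⟩, -⟩ := hS.1 xi y
    have hrT : r ∈ T := by
      apply step e xi r hrS
      rw [← he]; exact hrmem
    rwa [rel_unique hS hconvS hrS hconvmem hrmem]

lemma coset_eq_of_mem (hS : IsScheme S) (hT : IsClosedSub S T)
    {x y : X} (h : y ∈ coset T x) : coset T y = coset T x := by
  obtain ⟨t, htT, hxy⟩ := h
  have hdc := closed_conv hS hT htT
  apply Set.eq_of_subset_of_subset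
  · rintro z ⟨t', ht', hyz⟩
    obtain ⟨r, ⟨hrS, hrmem⟩, -⟩ := hS.1 x z
    refine ⟨r, ?_, hrmem⟩
    apply hT.2.2
    exact ⟨hrS, t, htT, t', ht', inum_ne_zero' hS (hT.2.1 htT) (hT.2.1 ht') hrS hrmem hxy hyz⟩
  · rintro z ⟨t', ht', hxz⟩
    obtain ⟨r, ⟨hrS, hrmem⟩, -⟩ := hS.1 y z
    refine ⟨r, ?_, hrmem⟩
    apply hT.2.2
    refine ⟨hrS, conv t, hdc.2, t', ht', ?_⟩
    exact inum_ne_zero' hS (hT.2.1 hdc.2) (hT.2.1 ht') hrS hrmem hxy hxz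

end SchemeHelpers

/-- Theorem 1: `(X, S')` is an association scheme algebraically isomorphic
to `(X, S)`. -/
theorem stmt13 {X : Type*} [Fintype X] (S T : Set (Set (X × X)))
    (hS : IsScheme S) (hT : IsClosedSub S T)
    (m : ℕ) (Xc : Fin m → Set X)
    (hXc : ∀ j, ∃ x : X, Xc j = coset T x)
    (hXc' : ∀ x : X, ∃! j, coset T x = Xc j)
    (ι : Fin m → Set (X × X) → Set (X × X))
    (hbij : ∀ j, Set.BijOn (ι j) T T)
    (hautT : ∀ j, ∀ u ∈ T, ∀ v ∈ T, ∀ w ∈ T, inum u v w = inum (ι j u) (ι j v) (ι j w))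
    (hautS : ∀ j, ∀ u ∈ S, ∀ v ∈ S, ∀ w ∈ S,
      inum u v w = inum (extOf T (ι j) u) (extOf T (ι j) v) (extOf T (ι j) w)) :
    IsScheme (primeOf T m Xc ι '' S) ∧
    ∃ f : Set (X × X) → Set (X × X), Set.BijOn f S (primeOf T m Xc ι '' S) ∧
      ∀ u ∈ S, ∀ v ∈ S, ∀ w ∈ S, inum u v w = inum (f u) (f v) (f w) := by
  classical
  set f := primeOf T m Xc ι with hf
  obtain ⟨t0, ht0⟩ := hT.1
  have hdiagT : diagRel X ∈ T := (closed_conv hS hT ht0).1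
  have hconvT : ∀ t ∈ T, conv t ∈ T := fun t ht => (closed_conv hS hT ht).2
  have hXne : Nonempty X := by
    obtain ⟨p, -⟩ := hS.2.1 _ hS.2.2.1
    exact ⟨p.1⟩
  have hιT : ∀ j, ∀ s ∈ T, ι j s ∈ T := fun j s hs => (hbij j).1 hs
  -- block facts
  have blk_ex : ∀ x : X, ∃ j, x ∈ Xc j ∧ coset T x = Xc j := by
    intro x
    obtain ⟨j, hj, -⟩ := hXc' x
    exact ⟨j, hj ▸ ⟨diagRel X, hdiagT, rfl⟩, hj⟩
  have blk_coset : ∀ {x : X} {j}, x ∈ Xc j → coset T x = Xc j := by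
    intro x j hx
    obtain ⟨xj, hxj⟩ := hXc j
    rw [hxj] at hx ⊢
    exact coset_eq_of_mem hS hT hx
  have blk_unique : ∀ {x : X} {j j'}, x ∈ Xc j → x ∈ Xc j' → j = j' :=
    fun hx hx' => (hXc' _).unique (blk_coset hx) (blk_coset hx')
  have blk_mem : ∀ {x y : X} {j} {t}, t ∈ T → (x, y) ∈ t → x ∈ Xc j → y ∈ Xc j := by
    intro x y j t ht hxy hx
    rw [← blk_coset hx]
    exact ⟨t, ht, hxy⟩
  -- primeOf membership
  have fpos : ∀ {s}, s ∈ T → f s = ⋃ j, (ι j s ∩ (Xc j ×ˢ Xc j)) := by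
    intro s hs
    rw [hf]
    unfold primeOf
    exact if_pos hs
  have fneg : ∀ {s}, s ∉ T → f s = s := by
    intro s hs
    rw [hf]
    unfold primeOf
    exact if_neg hs
  have M1 : ∀ {s j} {x y : X}, s ∈ T → x ∈ Xc j → ((x, y) ∈ f s ↔ (x, y) ∈ ι j s) := by
    intro s j x y hs hx
    rw [fpos hs]
    simp only [Set.mem_iUnion, Set.mem_inter_iff, Set.mem_prod]
    constructor
    · rintro ⟨j', h1, hx', hy'⟩
      rwa [blk_unique hx' hx] at h1
    · intro h
      exact ⟨j, h, hx, blk_mem (hιT j s hs) h hx⟩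
  have M2 : ∀ {s j} {x y : X}, s ∈ T → y ∈ Xc j → ((x, y) ∈ f s ↔ (x, y) ∈ ι j s) := by
    intro s j x y hs hy
    rw [fpos hs]
    simp only [Set.mem_iUnion, Set.mem_inter_iff, Set.mem_prod]
    constructor
    · rintro ⟨j', h1, hx', hy'⟩
      rwa [blk_unique hy' hy] at h1
    · intro h
      have hx : x ∈ Xc j := blk_mem (hconvT _ (hιT j s hs))
        (show (y, x) ∈ conv (ι j s) from h) hy
      exact ⟨j, h, hx, hy⟩
  -- extOf facts
  have extT : ∀ j, ∀ {u}, u ∈ T → extOf T (ι j) u = ι j u := by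
    intro j u h
    unfold extOf
    exact if_pos h
  have extN : ∀ j, ∀ {u}, u ∉ T → extOf T (ι j) u = u := by
    intro j u h
    unfold extOf
    exact if_neg h
  have extS : ∀ j, ∀ {u}, u ∈ S → extOf T (ι j) u ∈ S := by
    intro j u hu
    by_cases h : u ∈ T
    · rw [extT j h]; exact hT.2.1 (hιT j u h)
    · rw [extN j h]; exact hu
  -- ι fixes the diagonal and commutes with converse
  have ιdiag : ∀ j, ι j (diagRel X) = diagRel X := by
    intro j
    obtain ⟨t, htT, hιt⟩ := (hbij j).2.2 hdiagT
    obtain ⟨⟨a, b⟩, hab⟩ := hS.2.1 t (hT.2.1 htT)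
    have h0 : inum (diagRel X) t t ≠ 0 :=
      inum_ne_zero' hS hS.2.2.1 (hT.2.1 htT) (hT.2.1 htT) hab
        (show (a, a) ∈ diagRel X from rfl) hab
    have h1 := hautT j _ hdiagT _ htT _ htT
    rw [hιt] at h1
    rw [h1] at h0
    obtain ⟨c⟩ := hXne
    obtain ⟨z, hz1, hz2⟩ := exists_of_inum hS (hT.2.1 (hιT j _ hdiagT)) hS.2.2.1 hS.2.2.1
      (show (c, c) ∈ diagRel X from rfl) h0
    have hzc : z = c := hz2
    subst hzc
    exact rel_unique hS (hT.2.1 (hιT j _ hdiagT)) hS.2.2.1 hz1 rfl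
  have ιconv : ∀ j, ∀ {s}, s ∈ T → ι j (conv s) = conv (ι j s) := by
    intro j s hs
    obtain ⟨⟨a, b⟩, hab⟩ := hS.2.1 s (hT.2.1 hs)
    have h0 : inum s (conv s) (diagRel X) ≠ 0 :=
      inum_ne_zero' hS (hT.2.1 hs) (hS.2.2.2.1 s (hT.2.1 hs)) hS.2.2.1
        (show (a, a) ∈ diagRel X from rfl) hab hab
    have h1 := hautT j _ hs _ (hconvT s hs) _ hdiagT
    rw [ιdiag j] at h1
    rw [h1] at h0
    obtain ⟨c⟩ := hXne
    obtain ⟨z, hz1, hz2⟩ := exists_of_inum hS (hT.2.1 (hιT j s hs))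
      (hT.2.1 (hιT j _ (hconvT s hs))) hS.2.2.1 (show (c, c) ∈ diagRel X from rfl) h0
    exact rel_unique hS (hT.2.1 (hιT j _ (hconvT s hs)))
      (hS.2.2.2.1 _ (hT.2.1 (hιT j s hs))) hz2 (show (z, c) ∈ conv (ι j s) from hz1)
  -- nonemptiness of the image relations
  have fne : ∀ {s}, s ∈ S → (f s).Nonempty := by
    intro s hs
    by_cases hsT : s ∈ T
    · obtain ⟨c⟩ := hXne
      obtain ⟨j, hcj, -⟩ := blk_ex c
      obtain ⟨y, hy⟩ := exists_succ hS (hT.2.1 (hιT j s hsT)) c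
      exact ⟨(c, y), (M1 hsT hcj).mpr hy⟩
    · rw [fneg hsT]
      exact hS.2.1 s hs
  -- the key counting lemma
  have count : ∀ {u v w : Set (X × X)}, u ∈ S → v ∈ S → w ∈ S → ∀ {x y : X},
      (x, y) ∈ f w →
      Nat.card {z : X | (x, z) ∈ f u ∧ (z, y) ∈ f v} = inum u v w := by
    intro u v w hu hv hw x y hp
    by_cases hwT : w ∈ T
    · obtain ⟨j, hxj, -⟩ := blk_ex x
      have hpw : (x, y) ∈ ι j w := (M1 hwT hxj).mp hp
      have hyj : y ∈ Xc j := blk_mem (hιT j w hwT) hpw hxj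
      have hset : {z : X | (x, z) ∈ f u ∧ (z, y) ∈ f v} =
          {z : X | (x, z) ∈ extOf T (ι j) u ∧ (z, y) ∈ extOf T (ι j) v} := by
        ext z
        simp only [Set.mem_setOf_eq]
        apply and_congr
        · by_cases huT : u ∈ T
          · rw [extT j huT]; exact M1 huT hxj
          · rw [extN j huT, fneg huT]
        · by_cases hvT : v ∈ T
          · rw [extT j hvT]; exact M2 hvT hyj
          · rw [extN j hvT, fneg hvT]
      rw [hset, ← inum_eq hS (extS j hu) (extS j hv) (extS j hw)
        (show (x, y) ∈ extOf T (ι j) w by rw [extT j hwT]; exact hpw)]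
      exact (hautS j u hu v hv w hw).symm
    · rw [fneg hwT] at hp
      have hnb : ¬ ∃ t ∈ T, (x, y) ∈ t := by
        rintro ⟨t, htT, hxt⟩
        have heq : w = t := rel_unique hS hw (hT.2.1 htT) hp hxt
        rw [heq] at hwT
        exact hwT htT
      obtain ⟨jx, hxj, hcx⟩ := blk_ex x
      obtain ⟨jy, hyj, hcy⟩ := blk_ex y
      by_cases huT : u ∈ T <;> by_cases hvT : v ∈ T
      · have hzero : {z : X | (x, z) ∈ f u ∧ (z, y) ∈ f v} = ∅ := by
          ext z
          simp only [Set.mem_setOf_eq, Set.mem_empty_iff_false, iff_false, not_and]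
          intro h1 h2
          have hz1 : (x, z) ∈ ι jx u := (M1 huT hxj).mp h1
          have hz2 : (z, y) ∈ ι jy v := (M2 hvT hyj).mp h2
          have hzx : z ∈ Xc jx := blk_mem (hιT jx u huT) hz1 hxj
          have hzy : z ∈ Xc jy := blk_mem (hconvT _ (hιT jy v hvT))
            (show (y, z) ∈ conv (ι jy v) from hz2) hyj
          have hjj : jx = jy := blk_unique hzx hzy
          apply hnb
          have hyx : y ∈ Xc jx := hjj ▸ hyj
          rw [← hcx] at hyx
          exact hyx
        have hI0 : inum u v w = 0 := by
          by_contra h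
          exact hwT (hT.2.2 ⟨hw, u, huT, v, hvT, h⟩)
        rw [hzero, hI0]
        simp
      · have hset : {z : X | (x, z) ∈ f u ∧ (z, y) ∈ f v} =
            {z : X | (x, z) ∈ ι jx u ∧ (z, y) ∈ v} := by
          ext z
          simp only [Set.mem_setOf_eq]
          apply and_congr
          · exact M1 huT hxj
          · rw [fneg hvT]
        rw [hset, ← inum_eq hS (hT.2.1 (hιT jx u huT)) hv hw hp]
        have h := hautS jx u hu v hv w hw
        rw [extT jx huT, extN jx hvT, extN jx hwT] at h
        exact h.symm
      · have hset : {z : X | (x, z) ∈ f u ∧ (z, y) ∈ f v} =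
            {z : X | (x, z) ∈ u ∧ (z, y) ∈ ι jy v} := by
          ext z
          simp only [Set.mem_setOf_eq]
          apply and_congr
          · rw [fneg huT]
          · exact M2 hvT hyj
        rw [hset, ← inum_eq hS hu (hT.2.1 (hιT jy v hvT)) hw hp]
        have h := hautS jy u hu v hv w hw
        rw [extN jy huT, extT jy hvT, extN jy hwT] at h
        exact h.symm
      · have hset : {z : X | (x, z) ∈ f u ∧ (z, y) ∈ f v} =
            {z : X | (x, z) ∈ u ∧ (z, y) ∈ v} := by
          ext z
          simp only [Set.mem_setOf_eq]
          rw [fneg huT, fneg hvT]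
        rw [hset, ← inum_eq hS hu hv hw hp]
  -- preservation of intersection numbers
  have hpres : ∀ u ∈ S, ∀ v ∈ S, ∀ w ∈ S, inum u v w = inum (f u) (f v) (f w) := by
    intro u hu v hv w hw
    have hset : {n | ∃ p ∈ f w, n = Nat.card {z : X | (p.1, z) ∈ f u ∧ (z, p.2) ∈ f v}} =
        {inum u v w} := by
      ext n
      constructor
      · rintro ⟨⟨a, b⟩, hab, rfl⟩
        exact count hu hv hw hab
      · rintro rfl
        obtain ⟨⟨a, b⟩, hab⟩ := fne hw
        exact ⟨(a, b), hab, (count hu hv hw hab).symm⟩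
    show inum u v w =
      sSup {n | ∃ p ∈ f w, n = Nat.card {z : X | (p.1, z) ∈ f u ∧ (z, p.2) ∈ f v}}
    rw [hset, csSup_singleton]
  -- injectivity on S
  have mixed : ∀ {s t}, s ∈ T → t ∈ S → t ∉ T → f s ≠ f t := by
    intro s t hsT htS htT heq
    obtain ⟨⟨a, b⟩, hab⟩ := fne (hT.2.1 hsT)
    have hab' : (a, b) ∈ t := by rw [← fneg htT, ← heq]; exact hab
    obtain ⟨j, hja, -⟩ := blk_ex a
    have h1 : (a, b) ∈ ι j s := (M1 hsT hja).mp hab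
    have h2 : t = ι j s := rel_unique hS htS (hT.2.1 (hιT j s hsT)) hab' h1
    rw [h2] at htT
    exact htT (hιT j s hsT)
  have hinj : Set.InjOn f S := by
    intro s hs t ht h
    by_cases hsT : s ∈ T <;> by_cases htT : t ∈ T
    · obtain ⟨c⟩ := hXne
      obtain ⟨j, hcj, -⟩ := blk_ex c
      obtain ⟨y, hy⟩ := exists_succ hS (hT.2.1 (hιT j s hsT)) c
      have h1 : (c, y) ∈ f t := by rw [← h]; exact (M1 hsT hcj).mpr hy
      have h2 : (c, y) ∈ ι j t := (M1 htT hcj).mp h1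
      exact (hbij j).2.1 hsT htT
        (rel_unique hS (hT.2.1 (hιT j s hsT)) (hT.2.1 (hιT j t htT)) hy h2)
    · exact (mixed hsT ht htT h).elim
    · exact (mixed htT hs hsT h.symm).elim
    · rw [fneg hsT, fneg htT] at h
      exact h
  refine ⟨⟨?_, ?_, ?_, ?_, ?_⟩, f, ⟨Set.mapsTo_image f S, hinj, Set.surjOn_image f S⟩, hpres⟩
  · -- partition
    intro x y
    by_cases hxy : ∃ t ∈ T, (x, y) ∈ t
    · obtain ⟨t, htT, hxt⟩ := hxy
      obtain ⟨j, hxj, hcx⟩ := blk_ex x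
      obtain ⟨s, hsT, hιs⟩ := (hbij j).2.2 htT
      refine ⟨f s, ⟨Set.mem_image_of_mem f (hT.2.1 hsT),
        (M1 hsT hxj).mpr (by rw [hιs]; exact hxt)⟩, ?_⟩
      rintro s' ⟨⟨u, huS, rfl⟩, hmem⟩
      by_cases huT : u ∈ T
      · have h1 : (x, y) ∈ ι j u := (M1 huT hxj).mp hmem
        have h2 : ι j u = ι j s := by
          rw [hιs]
          exact rel_unique hS (hT.2.1 (hιT j u huT)) (hT.2.1 htT) h1 hxt
        rw [(hbij j).2.1 huT hsT h2]
      · exfalso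
        rw [fneg huT] at hmem
        have : u = t := rel_unique hS huS (hT.2.1 htT) hmem hxt
        rw [this] at huT
        exact huT htT
    · obtain ⟨w, ⟨hwS, hxw⟩, -⟩ := hS.1 x y
      have hwT : w ∉ T := fun h => hxy ⟨w, h, hxw⟩
      refine ⟨w, ⟨⟨w, hwS, fneg hwT⟩, hxw⟩, ?_⟩
      rintro s' ⟨⟨u, huS, rfl⟩, hmem⟩
      by_cases huT : u ∈ T
      · exfalso
        obtain ⟨j, hxj, -⟩ := blk_ex x
        exact hxy ⟨ι j u, hιT j u huT, (M1 huT hxj).mp hmem⟩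
      · rw [fneg huT] at hmem ⊢
        exact rel_unique hS huS hwS hmem hxw
  · -- nonempty
    rintro s' ⟨u, huS, rfl⟩
    exact fne huS
  · -- diagonal
    refine ⟨diagRel X, hS.2.2.1, ?_⟩
    rw [fpos hdiagT]
    ext ⟨a, b⟩
    simp only [Set.mem_iUnion, Set.mem_inter_iff, Set.mem_prod]
    constructor
    · rintro ⟨j, h1, -, -⟩
      rw [ιdiag j] at h1
      exact h1
    · intro h
      have hab : a = b := h
      subst hab
      obtain ⟨j, haj, -⟩ := blk_ex a
      exact ⟨j, by rw [ιdiag j]; rfl, haj, haj⟩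
  · -- converse
    rintro s' ⟨s, hsS, rfl⟩
    refine ⟨conv s, hS.2.2.2.1 s hsS, ?_⟩
    by_cases hsT : s ∈ T
    · rw [fpos (hconvT s hsT), fpos hsT]
      ext ⟨a, b⟩
      constructor
      · intro h
        have h' : (a, b) ∈ ⋃ j, (ι j (conv s) ∩ (Xc j ×ˢ Xc j)) := h
        simp only [Set.mem_iUnion, Set.mem_inter_iff, Set.mem_prod] at h'
        obtain ⟨j, h1, ha, hb⟩ := h'
        rw [ιconv j hsT] at h1
        show (b, a) ∈ ⋃ j, (ι j s ∩ (Xc j ×ˢ Xc j))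
        simp only [Set.mem_iUnion, Set.mem_inter_iff, Set.mem_prod]
        exact ⟨j, h1, hb, ha⟩
      · intro h
        have h' : (b, a) ∈ ⋃ j, (ι j s ∩ (Xc j ×ˢ Xc j)) := h
        simp only [Set.mem_iUnion, Set.mem_inter_iff, Set.mem_prod] at h'
        obtain ⟨j, h1, hb, ha⟩ := h'
        simp only [Set.mem_iUnion, Set.mem_inter_iff, Set.mem_prod]
        exact ⟨j, by rw [ιconv j hsT]; exact h1, ha, hb⟩
    · have hcT : conv s ∉ T := fun h => by
        have := hconvT _ h
        rw [conv_conv'] at this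
        exact hsT this
      rw [fneg hcT, fneg hsT]
  · -- regularity
    rintro s' ⟨u, huS, rfl⟩ t' ⟨v, hvS, rfl⟩ u' ⟨w, hwS, rfl⟩ p hp q hq
    obtain ⟨p1, p2⟩ := p
    obtain ⟨q1, q2⟩ := q
    exact (count huS hvS hwS hp).trans (count huS hvS hwS hq).symm
end
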